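/- arXiv:1903.12403 — 4 statements merged into one kernel-verified Lean document; each statement's English description precedes it below -/
import Mathlib

section
/- Let γ be a real 4×4 symplectic matrix (γᵀJγ = J with J = [[0, I₂],[−I₂, 0]]), and let η₁ ∈ ℂ⁴ be an eigenvector of γ with eigenvalue λ₀. If there exists η₂ ∈ ℂ⁴ with γη₂ = λ₀η₂ + λ₀η₁, then ⟨η₁, Jη₁⟩ = 0, where ⟨x,y⟩ = Σ xⱼ ȳⱼ is the standard Hermitian inner product on ℂ⁴. -/
open Matrix Complex Finset Polynomial

noncomputable section

/-- The standard symplectic form matrix `J₄ = [[0, I₂], [−I₂, 0]]` on `ℂ⁴`. -/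
def J4 : Matrix (Fin 4) (Fin 4) ℂ :=
  !![0, 0, 1, 0; 0, 0, 0, 1; -1, 0, 0, 0; 0, -1, 0, 0]

/-- The standard Hermitian inner product `⟨x, y⟩ = Σⱼ xⱼ conj(yⱼ)` on `ℂ⁴`. -/
def herm (x y : Fin 4 → ℂ) : ℂ := ∑ j, x j * (starRingEnd ℂ) (y j)

/-- A complex matrix has real entries. -/
def IsRealMat (M : Matrix (Fin 4) (Fin 4) ℂ) : Prop := ∀ i j, (M i j).im = 0

/-- A (complexified) matrix is symplectic: `Mᵀ J M = J`. -/
def IsSymp (M : Matrix (Fin 4) (Fin 4) ℂ) : Prop := Mᵀ * J4 * M = J4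

/-- Componentwise complex conjugate of a vector in `ℂ⁴`. -/
def conjVec (v : Fin 4 → ℂ) : Fin 4 → ℂ := fun j => (starRingEnd ℂ) (v j)

lemma real_mulVec_conj (M : Matrix (Fin 4) (Fin 4) ℂ) (hM : IsRealMat M)
    (v : Fin 4 → ℂ) : M.mulVec (conjVec v) = conjVec (M.mulVec v) := by
  funext i
  simp only [Matrix.mulVec, dotProduct, conjVec, map_sum]
  refine Finset.sum_congr rfl fun j _ => ?_
  rw [RingHom.map_mul, Complex.conj_eq_iff_im.2 (hM i j)]

lemma J4real : IsRealMat J4 := by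
  intro i j
  fin_cases i <;> fin_cases j <;> simp [J4, Matrix.vecHead, Matrix.vecTail]

lemma symp_invar (M : Matrix (Fin 4) (Fin 4) ℂ) (hM : IsSymp M) (u v : Fin 4 → ℂ) :
    (M.mulVec u) ⬝ᵥ J4.mulVec (M.mulVec v) = u ⬝ᵥ J4.mulVec v := by
  rw [Matrix.mulVec_mulVec, Matrix.dotProduct_mulVec, Matrix.vecMul_mulVec,
    ← Matrix.mul_assoc, hM, ← Matrix.dotProduct_mulVec]

theorem stmt0 (γ : Matrix (Fin 4) (Fin 4) ℂ) (hreal : IsRealMat γ) (hsymp : IsSymp γ)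
    (lam0 : ℂ) (η₁ η₂ : Fin 4 → ℂ) (hη₁ : η₁ ≠ 0)
    (h1 : γ.mulVec η₁ = lam0 • η₁)
    (h2 : γ.mulVec η₂ = lam0 • η₂ + lam0 • η₁) :
    herm η₁ (J4.mulVec η₁) = 0 := by
  have hconj1 : γ.mulVec (conjVec η₁) = (starRingEnd ℂ) lam0 • conjVec η₁ := by
    rw [real_mulVec_conj γ hreal, h1]
    funext i; simp [conjVec]
  have hconj2 : γ.mulVec (conjVec η₂)
      = (starRingEnd ℂ) lam0 • conjVec η₂ + (starRingEnd ℂ) lam0 • conjVec η₁ := by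
    rw [real_mulVec_conj γ hreal, h2]
    funext i; simp [conjVec]
  have hA := symp_invar γ hsymp η₁ (conjVec η₁)
  have hB := symp_invar γ hsymp η₁ (conjVec η₂)
  rw [h1, hconj1] at hA
  rw [h1, hconj2] at hB
  simp only [Matrix.mulVec_add, Matrix.mulVec_smul, dotProduct_add,
    dotProduct_smul, smul_dotProduct, smul_eq_mul, smul_add] at hA hB
  obtain ⟨a, ha⟩ : ∃ a, η₁ ⬝ᵥ J4.mulVec (conjVec η₁) = a := ⟨_, rfl⟩
  obtain ⟨b, hb⟩ : ∃ b, η₁ ⬝ᵥ J4.mulVec (conjVec η₂) = b := ⟨_, rfl⟩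
  rw [ha] at hA
  rw [ha, hb] at hB
  have haa : a * a = 0 := by linear_combination (-a - b) * hA + a * hB
  have ha0 : a = 0 := by
    rcases mul_eq_zero.1 haa with h | h <;> exact h
  have : herm η₁ (J4.mulVec η₁) = a := by
    rw [← ha, real_mulVec_conj J4 J4real η₁]
    simp [herm, dotProduct, conjVec]
  rw [this, ha0]
end
end

section
/- Let γ be a real 4×4 symplectic matrix, λ₀ a unit complex number with λ₀ ≠ ±1, and η₁, η₂ ∈ ℂ⁴ with γη₁ = λ₀η₁ and γη₂ = λ₀η₂ + λ₀η₁. Then ⟨η₂, Jη̄₁⟩ = 0 and ⟨η₁, Jη̄₂⟩ = 0, where η̄ᵢ are componentwise conjugates. -/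
/-!
`ω(x, y) = xᵀ J y` is an alternating bilinear form preserved by `γ`, so for the Jordan chain
`γη₁ = λ₀η₁`, `γη₂ = λ₀η₂ + λ₀η₁` one gets
`ω(η₂, η₁) = ω(γη₂, γη₁) = λ₀² ω(η₂, η₁) + λ₀² ω(η₁, η₁) = λ₀² ω(η₂, η₁)`, whence `ω(η₂, η₁) = 0`
as `λ₀² ≠ 1`. Since `J` is real, `⟨x, J ȳ⟩ = ω(x, y)`, and antisymmetry gives the second identity.
-/

open Matrix Complex Finset Polynomial

noncomputable section

section BilinearForm

variable {K n : Type*} [Fintype n]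

theorem dotProduct_mulVec_eq_neg_of_transpose_eq_neg [CommRing K] {A : Matrix n n K}
    (hA : Aᵀ = -A) (x y : n → K) : x ⬝ᵥ A *ᵥ y = -(y ⬝ᵥ A *ᵥ x) := by
  rw [dotProduct_mulVec, ← mulVec_transpose, hA, neg_mulVec, neg_dotProduct, dotProduct_comm]

theorem dotProduct_mulVec_self_eq_zero_of_transpose_eq_neg [Field K] [NeZero (2 : K)]
    {A : Matrix n n K} (hA : Aᵀ = -A) (x : n → K) : x ⬝ᵥ A *ᵥ x = 0 := by
  have h : 2 * (x ⬝ᵥ A *ᵥ x) = 0 := by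
    linear_combination dotProduct_mulVec_eq_neg_of_transpose_eq_neg hA x x
  exact (mul_eq_zero.1 h).resolve_left two_ne_zero

theorem dotProduct_mulVec_mulVec_of_transpose_mul_mul_eq [CommRing K] {A M : Matrix n n K}
    (hM : Mᵀ * A * M = A) (x y : n → K) :
    (M *ᵥ x) ⬝ᵥ A *ᵥ (M *ᵥ y) = x ⬝ᵥ A *ᵥ y := by
  rw [dotProduct_mulVec, dotProduct_mulVec, ← vecMul_transpose, vecMul_vecMul, vecMul_vecMul,
    ← Matrix.mul_assoc, hM, ← dotProduct_mulVec]

theorem dotProduct_mulVec_eq_zero_of_jordanChain [Field K] [NeZero (2 : K)]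
    {A M : Matrix n n K} (hA : Aᵀ = -A) (hM : Mᵀ * A * M = A) {μ : K} (hμ₁ : μ ≠ 1)
    (hμ₂ : μ ≠ -1) {v₁ v₂ : n → K} (hv₁ : M *ᵥ v₁ = μ • v₁)
    (hv₂ : M *ᵥ v₂ = μ • v₂ + μ • v₁) : v₂ ⬝ᵥ A *ᵥ v₁ = 0 := by
  have hμ : μ ^ 2 ≠ 1 := fun h => (sq_eq_one_iff.1 h).elim hμ₁ hμ₂
  have hinv := dotProduct_mulVec_mulVec_of_transpose_mul_mul_eq hM v₂ v₁
  simp only [hv₁, hv₂, mulVec_smul, add_dotProduct, smul_dotProduct, dotProduct_smul, smul_eq_mul,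
    dotProduct_mulVec_self_eq_zero_of_transpose_eq_neg hA v₁] at hinv
  have h : (1 - μ ^ 2) * (v₂ ⬝ᵥ A *ᵥ v₁) = 0 := by linear_combination -hinv
  exact (mul_eq_zero.1 h).resolve_left (sub_ne_zero.2 hμ.symm)

end BilinearForm

theorem J4_transpose : J4ᵀ = -J4 := by
  ext i j
  fin_cases i <;> fin_cases j <;> simp [J4]

theorem herm_J4_mulVec_conjVec (x y : Fin 4 → ℂ) :
    herm x (J4 *ᵥ conjVec y) = x ⬝ᵥ J4 *ᵥ y := by
  have hJ (i j : Fin 4) : starRingEnd ℂ (J4 i j) = J4 i j := by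
    fin_cases i <;> fin_cases j <;> simp [J4]
  simp only [herm, conjVec, mulVec, dotProduct, map_sum, map_mul, hJ, Complex.conj_conj]

theorem stmt2_general (γ : Matrix (Fin 4) (Fin 4) ℂ) (hsymp : IsSymp γ)
    (lam0 : ℂ) (h1' : lam0 ≠ 1) (h2' : lam0 ≠ -1)
    (η₁ η₂ : Fin 4 → ℂ)
    (h1 : γ.mulVec η₁ = lam0 • η₁)
    (h2 : γ.mulVec η₂ = lam0 • η₂ + lam0 • η₁) :
    herm η₂ (J4.mulVec (conjVec η₁)) = 0 ∧ herm η₁ (J4.mulVec (conjVec η₂)) = 0 := by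
  have hs : η₂ ⬝ᵥ J4 *ᵥ η₁ = 0 :=
    dotProduct_mulVec_eq_zero_of_jordanChain J4_transpose hsymp h1' h2' h1 h2
  refine ⟨?_, ?_⟩
  · rw [herm_J4_mulVec_conjVec, hs]
  · rw [herm_J4_mulVec_conjVec, dotProduct_mulVec_eq_neg_of_transpose_eq_neg J4_transpose, hs,
      neg_zero]

theorem stmt2 (γ : Matrix (Fin 4) (Fin 4) ℂ) (hreal : IsRealMat γ) (hsymp : IsSymp γ)
    (lam0 : ℂ) (hunit : ‖lam0‖ = 1) (h1' : lam0 ≠ 1) (h2' : lam0 ≠ -1)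
    (η₁ η₂ : Fin 4 → ℂ)
    (h1 : γ.mulVec η₁ = lam0 • η₁)
    (h2 : γ.mulVec η₂ = lam0 • η₂ + lam0 • η₁) :
    herm η₂ (J4.mulVec (conjVec η₁)) = 0 ∧ herm η₁ (J4.mulVec (conjVec η₂)) = 0 :=
  stmt2_general γ hsymp lam0 h1' h2' η₁ η₂ h1 h2
end
end

section
/- Let γ be a real 4×4 symplectic matrix, λ₀ ∈ ℂ, and η₁, η₂ ∈ ℂ⁴ with γη₁ = λ₀η₁ and γη₂ = λ₀η₂ + λ₀η₁, where λ₀ ≠ 0. Then ⟨η₁, Jη₂⟩ + ⟨η₂, Jη₁⟩ = 0; equivalently, since ⟨η₁,Jη₂⟩ = −conj(⟨η₂,Jη₁⟩), the number ⟨η₂, Jη₁⟩ is real. -/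
open Matrix Complex Finset Polynomial

noncomputable section

lemma Binv (γ : Matrix (Fin 4) (Fin 4) ℂ) (hsymp : IsSymp γ) (x y : Fin 4 → ℂ) :
    (γ.mulVec x) ⬝ᵥ J4.mulVec (γ.mulVec y) = x ⬝ᵥ J4.mulVec y := by
  rw [mulVec_mulVec, dotProduct_mulVec, ← transpose_transpose γ, mulVec_transpose,
    vecMul_vecMul, ← Matrix.mul_assoc, transpose_transpose, hsymp, ← dotProduct_mulVec]

lemma conj_mulVec (γ : Matrix (Fin 4) (Fin 4) ℂ) (hreal : IsRealMat γ) (v : Fin 4 → ℂ) :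
    γ.mulVec (conjVec v) = conjVec (γ.mulVec v) := by
  funext j
  simp only [conjVec, mulVec, dotProduct, map_sum]
  refine Finset.sum_congr rfl fun k _ => ?_
  rw [_root_.map_mul, Complex.conj_eq_iff_im.2 (hreal j k)]

lemma herm_eq (x y : Fin 4 → ℂ) : herm x (J4.mulVec y) = x ⬝ᵥ J4.mulVec (conjVec y) := by
  simp [herm, J4, mulVec, dotProduct, conjVec, Fin.sum_univ_four,
    Matrix.vecHead, Matrix.vecTail, Function.comp]

lemma conj_B (x y : Fin 4 → ℂ) :
    (starRingEnd ℂ) (x ⬝ᵥ J4.mulVec (conjVec y)) = -(y ⬝ᵥ J4.mulVec (conjVec x)) := by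
  simp [J4, mulVec, dotProduct, conjVec, Fin.sum_univ_four,
    Matrix.vecHead, Matrix.vecTail, Function.comp, mul_comm]
  ring

lemma conjVec_smul (c : ℂ) (v : Fin 4 → ℂ) :
    conjVec (c • v) = (starRingEnd ℂ) c • conjVec v := by
  funext j; simp [conjVec, mul_comm]

lemma conjVec_add (u v : Fin 4 → ℂ) : conjVec (u + v) = conjVec u + conjVec v := by
  funext j; simp [conjVec]

theorem stmt4 (γ : Matrix (Fin 4) (Fin 4) ℂ) (hreal : IsRealMat γ) (hsymp : IsSymp γ)
    (lam0 : ℂ) (hlam0 : lam0 ≠ 0)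
    (η₁ η₂ : Fin 4 → ℂ)
    (h1 : γ.mulVec η₁ = lam0 • η₁)
    (h2 : γ.mulVec η₂ = lam0 • η₂ + lam0 • η₁) :
    herm η₁ (J4.mulVec η₂) + herm η₂ (J4.mulVec η₁) = 0 ∧
      (herm η₂ (J4.mulVec η₁)).im = 0 := by
  set l := lam0 with hl
  set lc := (starRingEnd ℂ) lam0 with hlc
  set a := η₁ ⬝ᵥ J4.mulVec (conjVec η₁) with ha
  set b := η₁ ⬝ᵥ J4.mulVec (conjVec η₂) with hb
  set c := η₂ ⬝ᵥ J4.mulVec (conjVec η₁) with hc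
  set d := η₂ ⬝ᵥ J4.mulVec (conjVec η₂) with hd
  have h1c : γ.mulVec (conjVec η₁) = lc • conjVec η₁ := by
    rw [conj_mulVec γ hreal, h1, conjVec_smul]
  have h2c : γ.mulVec (conjVec η₂) = lc • conjVec η₂ + lc • conjVec η₁ := by
    rw [conj_mulVec γ hreal, h2, conjVec_add, conjVec_smul, conjVec_smul]
  -- invariance equations
  have eqa : a = l * lc * a := by
    have := Binv γ hsymp η₁ (conjVec η₁)
    rw [h1, h1c, mulVec_smul, smul_dotProduct, dotProduct_smul] at this
    simp only [← ha, ← hb, ← hc, ← hd, smul_eq_mul] at this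
    linear_combination -this
  have eqb : b = l * lc * (b + a) := by
    have := Binv γ hsymp η₁ (conjVec η₂)
    rw [h1, h2c, mulVec_add, mulVec_smul, mulVec_smul, smul_dotProduct,
      dotProduct_add, dotProduct_smul, dotProduct_smul] at this
    simp only [← ha, ← hb, ← hc, ← hd, smul_eq_mul] at this
    linear_combination -this
  have eqc : c = l * lc * (c + a) := by
    have := Binv γ hsymp η₂ (conjVec η₁)
    rw [h2, h1c, mulVec_smul, add_dotProduct, smul_dotProduct, smul_dotProduct,
      dotProduct_smul, dotProduct_smul] at this
    simp only [← ha, ← hb, ← hc, ← hd, smul_eq_mul] at this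
    linear_combination -this
  have eqd : d = l * lc * (d + b + c + a) := by
    have := Binv γ hsymp η₂ (conjVec η₂)
    rw [h2, h2c, mulVec_add, mulVec_smul, mulVec_smul, add_dotProduct,
      smul_dotProduct, smul_dotProduct, dotProduct_add, dotProduct_add,
      dotProduct_smul, dotProduct_smul, dotProduct_smul, dotProduct_smul] at this
    simp only [← ha, ← hb, ← hc, ← hd, smul_eq_mul] at this
    linear_combination -this
  -- a = 0
  have ha0 : a = 0 := by
    by_cases h : l * lc = 1
    · rw [h, one_mul] at eqb
      linear_combination -eqb
    · have h' : a * (1 - l * lc) = 0 := by linear_combination eqa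
      rcases mul_eq_zero.1 h' with h'' | h''
      · exact h''
      · exact absurd (by linear_combination -h'') h
  -- b + c = 0
  have hbc : b + c = 0 := by
    by_cases h : l * lc = 1
    · rw [h, one_mul, ha0] at eqd
      linear_combination -eqd
    · have hb0 : b = 0 := by
        rw [ha0, add_zero] at eqb
        have h' : b * (1 - l * lc) = 0 := by linear_combination eqb
        rcases mul_eq_zero.1 h' with h'' | h''
        · exact h''
        · exact absurd (by linear_combination -h'') h
      have hc0 : c = 0 := by
        rw [ha0, add_zero] at eqc
        have h' : c * (1 - l * lc) = 0 := by linear_combination eqc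
        rcases mul_eq_zero.1 h' with h'' | h''
        · exact h''
        · exact absurd (by linear_combination -h'') h
      rw [hb0, hc0, add_zero]
  have key1 : herm η₁ (J4.mulVec η₂) + herm η₂ (J4.mulVec η₁) = 0 := by
    rw [herm_eq, herm_eq, ← hb, ← hc]; exact hbc
  refine ⟨key1, ?_⟩
  have hcc : (starRingEnd ℂ) c = c := by
    have h1' : (starRingEnd ℂ) b = -c := by rw [hb, hc]; exact conj_B η₁ η₂
    have h2' : c = -b := by linear_combination hbc
    rw [h2', map_neg, h1', neg_neg]; exact h2'
  rw [herm_eq, ← hc]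
  exact Complex.conj_eq_iff_im.1 hcc
end
end

section
/- Let γ ∈ Sp(4,ℝ) with λ₀ ∈ U (|λ₀|=1), λ₀ ≠ ±1, and suppose η₁, η₂ ∈ ℂ⁴ satisfy γη₁ = λ₀η₁ and γη₂ = λ₀η₂ + λ₀η₁ with ⟨η₂, Jη₁⟩ ≠ 0. Then the real part of λ̄₀ · λ₀ · (⟨Aη₁,η₁⟩/⟨η₂,Jη₁⟩ + ⟨Aη₁,η₂⟩/⟨η₁,Jη₂⟩ + ⟨Aη₂,η₁⟩/⟨η₂,Jη₁⟩ − ⟨Aη₁,η₁⟩⟨η₂,Jη₂⟩/(⟨η₂,Jη₁⟩⟨η₁,Jη₂⟩)) equals ⟨Aη₁,η₁⟩/⟨η₂,Jη₁⟩, for any real symmetric 4×4 matrix A. -/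
open Matrix Complex Finset Polynomial

noncomputable section

/-!
For real `γ` with `γᵀ J γ = J` the form `ω(x, y) = ⟨x, J y⟩` is `γ`-invariant and
skew-Hermitian, while `⟨A x, y⟩` is Hermitian for real symmetric `A`. Invariance along the
Jordan chain, with `λ̄₀ λ₀ = 1`, gives `ω(η₁, η₁) = 0` and then `ω(η₁, η₂) = -ω(η₂, η₁)`, so
`b = ω(η₂, η₁)` is real. In the sum, `⟨Aη₁, η₁⟩` and `b` are real, `ω(η₂, η₂)` is imaginary,
and the two middle terms combine to `(conj p - p) / b` with `p = ⟨Aη₁, η₂⟩`; hence only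
`⟨Aη₁, η₁⟩ / b` survives in the real part.
-/

lemma herm_eq_dotProduct_star (x y : Fin 4 → ℂ) : herm x y = x ⬝ᵥ star y := rfl

@[simp] lemma herm_add_left (x y z : Fin 4 → ℂ) : herm (x + y) z = herm x z + herm y z := by
  simp only [herm_eq_dotProduct_star, add_dotProduct]

@[simp] lemma herm_add_right (x y z : Fin 4 → ℂ) : herm x (y + z) = herm x y + herm x z := by
  simp only [herm_eq_dotProduct_star, star_add, dotProduct_add]

@[simp] lemma herm_smul_left (s : ℂ) (x y : Fin 4 → ℂ) : herm (s • x) y = s * herm x y := by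
  simp only [herm_eq_dotProduct_star, smul_dotProduct, smul_eq_mul]

@[simp] lemma herm_smul_right (s : ℂ) (x y : Fin 4 → ℂ) :
    herm x (s • y) = starRingEnd ℂ s * herm x y := by
  simp only [herm_eq_dotProduct_star, star_smul, dotProduct_smul, smul_eq_mul]
  rfl

@[simp] lemma herm_neg_right (x y : Fin 4 → ℂ) : herm x (-y) = -herm x y := by
  simp only [herm_eq_dotProduct_star, star_neg, dotProduct_neg]

lemma conj_herm (x y : Fin 4 → ℂ) : starRingEnd ℂ (herm x y) = herm y x := by
  rw [herm_eq_dotProduct_star, herm_eq_dotProduct_star, dotProduct_star y x]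
  rfl

lemma herm_mulVec_left (M : Matrix (Fin 4) (Fin 4) ℂ) (x y : Fin 4 → ℂ) :
    herm (M *ᵥ x) y = herm x (Mᴴ *ᵥ y) := by
  rw [herm_eq_dotProduct_star, herm_eq_dotProduct_star, star_mulVec, conjTranspose_conjTranspose,
    dotProduct_comm, dotProduct_mulVec, dotProduct_comm]

lemma IsRealMat.conjTranspose_eq {M : Matrix (Fin 4) (Fin 4) ℂ} (hM : IsRealMat M) : Mᴴ = Mᵀ := by
  ext i j
  exact Complex.conj_eq_iff_im.mpr (hM j i)

lemma J4_conjTranspose : J4ᴴ = -J4 := by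
  ext i j
  fin_cases i <;> fin_cases j <;> simp [J4]

def sympForm (x y : Fin 4 → ℂ) : ℂ := herm x (J4 *ᵥ y)

lemma conj_sympForm (x y : Fin 4 → ℂ) : starRingEnd ℂ (sympForm x y) = -sympForm y x := by
  rw [sympForm, conj_herm, herm_mulVec_left, J4_conjTranspose, neg_mulVec, herm_neg_right, sympForm]

lemma sympForm_self_re (x : Fin 4 → ℂ) : (sympForm x x).re = 0 := by
  have h := congrArg Complex.re (conj_sympForm x x)
  rw [Complex.conj_re, Complex.neg_re] at h
  linarith

lemma sympForm_mulVec_mulVec {γ : Matrix (Fin 4) (Fin 4) ℂ} (hγ : γᴴ * J4 * γ = J4)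
    (x y : Fin 4 → ℂ) : sympForm (γ *ᵥ x) (γ *ᵥ y) = sympForm x y := by
  rw [sympForm, herm_mulVec_left, mulVec_mulVec, mulVec_mulVec, hγ, sympForm]

lemma sympForm_jordan_chain {γ : Matrix (Fin 4) (Fin 4) ℂ} (hγ : γᴴ * J4 * γ = J4) {lam : ℂ}
    (hlam : starRingEnd ℂ lam * lam = 1) {η₁ η₂ : Fin 4 → ℂ} (h1 : γ *ᵥ η₁ = lam • η₁)
    (h2 : γ *ᵥ η₂ = lam • η₂ + lam • η₁) :
    sympForm η₁ η₂ = -sympForm η₂ η₁ := by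
  have h21 := sympForm_mulVec_mulVec hγ η₂ η₁
  have h22 := sympForm_mulVec_mulVec hγ η₂ η₂
  rw [h1, h2] at h21
  rw [h2] at h22
  simp only [sympForm, mulVec_add, mulVec_smul, herm_add_left, herm_add_right, herm_smul_left,
    herm_smul_right] at h21 h22 ⊢
  -- invariance of `ω(η₂, η₁)` isolates `ω(η₁, η₁)`; that of `ω(η₂, η₂)` then the claim
  have h11 : herm η₁ (J4 *ᵥ η₁) = 0 := by
    linear_combination h21 - (herm η₂ (J4 *ᵥ η₁) + herm η₁ (J4 *ᵥ η₁)) * hlam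
  linear_combination h22 - (herm η₂ (J4 *ᵥ η₂) + herm η₂ (J4 *ᵥ η₁) + herm η₁ (J4 *ᵥ η₂)
    + herm η₁ (J4 *ᵥ η₁)) * hlam - h11

lemma IsRealMat.conjTranspose_mul_J4_mul {γ : Matrix (Fin 4) (Fin 4) ℂ} (hreal : IsRealMat γ)
    (hsymp : IsSymp γ) : γᴴ * J4 * γ = J4 := by
  rw [hreal.conjTranspose_eq]
  exact hsymp

lemma conj_herm_mulVec_left {A : Matrix (Fin 4) (Fin 4) ℂ} (hA : Aᴴ = A) (x y : Fin 4 → ℂ) :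
    starRingEnd ℂ (herm (A *ᵥ x) y) = herm (A *ᵥ y) x := by
  rw [conj_herm, herm_mulVec_left, hA]

lemma herm_mulVec_self_im {A : Matrix (Fin 4) (Fin 4) ℂ} (hA : Aᴴ = A) (x : Fin 4 → ℂ) :
    (herm (A *ᵥ x) x).im = 0 :=
  Complex.conj_eq_iff_im.mp (conj_herm_mulVec_left hA x x)

lemma re_bifurcation_sum {a b c d p q : ℂ} (ha : a.im = 0) (hb : b.im = 0) (hc : c = -b)
    (hd : d.re = 0) (hq : q = starRingEnd ℂ p) :
    ((a / b + p / c + q / b - a * d / (b * c)).re : ℂ) = a / b := by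
  subst hc hq
  lift a to ℝ using ha
  lift b to ℝ using hb
  have hsplit : (a / b + p / -b + starRingEnd ℂ p / b - a * d / (b * -b) : ℂ)
      = (a - p + starRingEnd ℂ p) / b + a * d / b / b := by ring
  rw [hsplit, Complex.add_re, Complex.div_ofReal_re, Complex.div_ofReal_re, Complex.div_ofReal_re]
  simp [hd]

theorem stmt10_general (γ : Matrix (Fin 4) (Fin 4) ℂ) (hreal : IsRealMat γ) (hsymp : IsSymp γ)
    (lam0 : ℂ) (hunit : ‖lam0‖ = 1)
    (η₁ η₂ : Fin 4 → ℂ)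
    (h1 : γ.mulVec η₁ = lam0 • η₁)
    (h2 : γ.mulVec η₂ = lam0 • η₂ + lam0 • η₁)
    (A : Matrix (Fin 4) (Fin 4) ℂ) (hAreal : IsRealMat A) (hAsymm : Aᵀ = A) :
    (((starRingEnd ℂ) lam0 * lam0 *
        (herm (A.mulVec η₁) η₁ / herm η₂ (J4.mulVec η₁) +
          herm (A.mulVec η₁) η₂ / herm η₁ (J4.mulVec η₂) +
          herm (A.mulVec η₂) η₁ / herm η₂ (J4.mulVec η₁) -
          herm (A.mulVec η₁) η₁ * herm η₂ (J4.mulVec η₂) /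
            (herm η₂ (J4.mulVec η₁) * herm η₁ (J4.mulVec η₂)))).re : ℂ) =
      herm (A.mulVec η₁) η₁ / herm η₂ (J4.mulVec η₁) := by
  have hlam : starRingEnd ℂ lam0 * lam0 = 1 := by
    rw [Complex.conj_mul', hunit, Complex.ofReal_one, one_pow]
  have hA : Aᴴ = A := hAreal.conjTranspose_eq.trans hAsymm
  have h12 := sympForm_jordan_chain (hreal.conjTranspose_mul_J4_mul hsymp) hlam h1 h2
  have h21_real : (sympForm η₂ η₁).im = 0 :=
    Complex.conj_eq_iff_im.mp (by rw [conj_sympForm, h12, neg_neg])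
  rw [hlam, one_mul]
  exact re_bifurcation_sum (herm_mulVec_self_im hA η₁) h21_real h12 (sympForm_self_re η₂)
    (conj_herm_mulVec_left hA η₁ η₂).symm

theorem stmt10 (γ : Matrix (Fin 4) (Fin 4) ℂ) (hreal : IsRealMat γ) (hsymp : IsSymp γ)
    (lam0 : ℂ) (hunit : ‖lam0‖ = 1) (h1' : lam0 ≠ 1) (h2' : lam0 ≠ -1)
    (η₁ η₂ : Fin 4 → ℂ)
    (h1 : γ.mulVec η₁ = lam0 • η₁)
    (h2 : γ.mulVec η₂ = lam0 • η₂ + lam0 • η₁)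
    (hne : herm η₂ (J4.mulVec η₁) ≠ 0)
    (A : Matrix (Fin 4) (Fin 4) ℂ) (hAreal : IsRealMat A) (hAsymm : Aᵀ = A) :
    (((starRingEnd ℂ) lam0 * lam0 *
        (herm (A.mulVec η₁) η₁ / herm η₂ (J4.mulVec η₁) +
          herm (A.mulVec η₁) η₂ / herm η₁ (J4.mulVec η₂) +
          herm (A.mulVec η₂) η₁ / herm η₂ (J4.mulVec η₁) -
          herm (A.mulVec η₁) η₁ * herm η₂ (J4.mulVec η₂) /
            (herm η₂ (J4.mulVec η₁) * herm η₁ (J4.mulVec η₂)))).re : ℂ) =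
      herm (A.mulVec η₁) η₁ / herm η₂ (J4.mulVec η₁) :=
  stmt10_general γ hreal hsymp lam0 hunit η₁ η₂ h1 h2 A hAreal hAsymm
end
end
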